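/- arXiv:2503.19781 — 4 statements merged into one kernel-verified Lean document; each statement's English description precedes it below -/
import Mathlib

section
/- Let θ be a solution of the generalized Kuramoto model (symmetric coupling, zero-diagonal, Σ_j ω_j = 0) which is a phase-locked state, i.e., there is L > 0 with |θ_j(t) − θ_k(t)| ≤ L for all j,k and all t > 0. Then θ is a frequency synchronization state: lim_{t→∞} θ̇_j(t) = 0 for all j. -/
/-!
Along a solution, the energy `E(θ) = -∑ ωⱼ θⱼ - (1/2N) ∑ Λⱼₖ cos (θₖ - θⱼ)` decreases at rate
`∑ dⱼ θ̇ⱼ²`. Because `∑ ωⱼ = 0`, the linear part of `E` only sees phase differences, so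
phase-locking bounds `E` from below and `E` converges. The velocities are uniformly continuous
(the force is Lipschitz in the phases, whose speeds are bounded), so a velocity of size `ε` at
late times would make `E` drop by a fixed amount on a fixed-length window, which convergence
of `E` rules out.
-/

open Filter Topology Finset Real Set

theorem abs_sub_le_mul_abs_sub_of_hasDerivAt {f f' : ℝ → ℝ} {C : ℝ}
    (hf : ∀ t, HasDerivAt f (f' t) t) (hC : ∀ t, |f' t| ≤ C) (s t : ℝ) :
    |f s - f t| ≤ C * |s - t| := by
  simpa only [Real.norm_eq_abs] using
    convex_univ.norm_image_sub_le_of_norm_hasDerivWithin_le (fun x _ => (hf x).hasDerivWithinAt)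
      (fun x _ => hC x) (mem_univ t) (mem_univ s)

theorem uniformContinuous_of_abs_sub_le_mul {f : ℝ → ℝ} {K : ℝ}
    (h : ∀ s t, |f s - f t| ≤ K * |s - t|) : UniformContinuous f :=
  (LipschitzWith.of_dist_le_mul (K := K.toNNReal) fun s t =>
    (h s t).trans (mul_le_mul_of_nonneg_right (Real.le_coe_toNNReal K) (abs_nonneg _)))
    |>.uniformContinuous

theorem sub_le_mul_sub_of_hasDerivAt_le {V V' : ℝ → ℝ} {C a b : ℝ} (hab : a ≤ b)
    (hV : ∀ t, HasDerivAt V (V' t) t) (hC : ∀ t ∈ Icc a b, V' t ≤ C) :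
    V b - V a ≤ C * (b - a) :=
  (convex_Icc a b).image_sub_le_mul_sub_of_deriv_le
    (fun t _ => (hV t).continuousAt.continuousWithinAt)
    (fun t _ => (hV t).differentiableAt.differentiableWithinAt)
    (fun t ht => (hV t).deriv ▸ hC t (interior_subset ht)) a (left_mem_Icc.2 hab) b
    (right_mem_Icc.2 hab) hab

theorem Antitone.bddBelow_range_of_eventually_ge {α β : Type*} [SemilatticeSup α] [Nonempty α]
    [Preorder β] {V : α → β} {m : β} (hV : Antitone V) (hm : ∀ᶠ t in atTop, m ≤ V t) :
    BddBelow (range V) := by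
  obtain ⟨T, hT⟩ := eventually_atTop.1 hm
  refine ⟨m, ?_⟩
  rintro _ ⟨t, rfl⟩
  exact (hT _ le_sup_right).trans (hV (le_sup_left : t ≤ t ⊔ T))

theorem tendsto_zero_of_hasDerivAt_le_neg_mul_sq {V V' g : ℝ → ℝ} {c m : ℝ} (hc : 0 < c)
    (hV : ∀ t, HasDerivAt V (V' t) t) (hV' : ∀ t, V' t ≤ -(c * g t ^ 2))
    (hm : ∀ᶠ t in atTop, m ≤ V t) (hg : UniformContinuous g) :
    Tendsto g atTop (𝓝 0) := by
  have hanti : Antitone V :=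
    antitone_of_hasDerivAt_nonpos hV fun t =>
      (hV' t).trans (neg_nonpos.2 (by positivity))
  obtain ⟨ℓ, hℓ⟩ : ∃ ℓ, Tendsto V atTop (𝓝 ℓ) :=
    ⟨_, tendsto_atTop_ciInf hanti (hanti.bddBelow_range_of_eventually_ge hm)⟩
  rw [Metric.tendsto_nhds]
  intro ε hε
  obtain ⟨δ, hδ, hgδ⟩ := Metric.uniformContinuous_iff.1 hg (ε / 2) (half_pos hε)
  obtain ⟨r, hr, hrδ⟩ : ∃ r, 0 < r ∧ r < δ := ⟨δ / 2, half_pos hδ, half_lt_self hδ⟩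
  have hdrop : Tendsto (fun t => V (t - r) - V (t + r)) atTop (𝓝 0) := by
    simpa [sub_eq_add_neg] using (hℓ.comp (tendsto_atTop_add_const_right _ (-r) tendsto_id)).sub
      (hℓ.comp (tendsto_atTop_add_const_right _ r tendsto_id))
  have hgap : (0 : ℝ) < c * (ε / 2) ^ 2 * (2 * r) := by positivity
  filter_upwards [hdrop.eventually (gt_mem_nhds hgap)] with t ht
  rw [Real.dist_0_eq_abs]
  by_contra! hgt
  -- `|g| ≥ ε / 2` on the whole window, so `V` drops there by at least `c (ε/2)² · 2r`.
  have hslope : ∀ s ∈ Icc (t - r) (t + r), V' s ≤ -(c * (ε / 2) ^ 2) := by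
    intro s hs
    have hst : dist s t < δ := by
      rw [Real.dist_eq, abs_lt]; constructor <;> linarith [hs.1, hs.2]
    have hgs : ε / 2 ≤ |g s| := by
      have := hgδ hst
      rw [Real.dist_eq] at this
      linarith [abs_sub_abs_le_abs_sub (g t) (g s), abs_sub_comm (g s) (g t)]
    have : (ε / 2) ^ 2 ≤ g s ^ 2 := by
      rw [← sq_abs (g s)]; gcongr
    nlinarith [hV' s]
  have := sub_le_mul_sub_of_hasDerivAt_le (by linarith) hV hslope
  linarith

theorem Finset.sum_sum_mul_sub_of_antisymm {ι R : Type*} [Fintype ι] [CommRing R]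
    {A : ι → ι → R} (hA : ∀ j k, A k j = -A j k) (y : ι → R) :
    ∑ j, ∑ k, A j k * (y k - y j) = -2 * ∑ j, (∑ k, A j k) * y j := by
  have hswap : ∑ j, ∑ k, A j k * y k = -∑ j, (∑ k, A j k) * y j := by
    rw [sum_comm, ← sum_neg_distrib]
    refine sum_congr rfl fun k _ => ?_
    rw [sum_mul, ← sum_neg_distrib]
    exact sum_congr rfl fun j _ => by rw [hA]; ring
  simp only [mul_sub, sum_sub_distrib, hswap, sum_mul]
  ring

noncomputable section

variable {N : ℕ} (ω : Fin N → ℝ) (Λ : Fin N → Fin N → ℝ)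

def kuramotoForce (x : Fin N → ℝ) (j : Fin N) : ℝ :=
  ω j + (1 / (N : ℝ)) * ∑ k, Λ j k * sin (x k - x j)

-- The model is the gradient flow `d j * ẋ j = -∂ⱼ E` of this energy when `Λ` is symmetric.
def kuramotoEnergy (x : Fin N → ℝ) : ℝ :=
  -∑ j, ω j * x j - (1 / (2 * (N : ℝ))) * ∑ j, ∑ k, Λ j k * cos (x k - x j)

theorem abs_kuramotoForce_le (x : Fin N → ℝ) (j : Fin N) :
    |kuramotoForce ω Λ x j| ≤ |ω j| + (1 / (N : ℝ)) * ∑ k, |Λ j k| := by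
  unfold kuramotoForce
  refine (abs_add_le _ _).trans (add_le_add_right ?_ _)
  rw [abs_mul, abs_of_nonneg (by positivity : (0 : ℝ) ≤ 1 / N)]
  gcongr
  refine (abs_sum_le_sum_abs _ _).trans (sum_le_sum fun k _ => ?_)
  rw [abs_mul]
  exact mul_le_of_le_one_right (abs_nonneg _) (abs_sin_le_one _)

theorem abs_kuramotoForce_sub_le {x y C : Fin N → ℝ} (h : ∀ k, |x k - y k| ≤ C k) (j : Fin N) :
    |kuramotoForce ω Λ x j - kuramotoForce ω Λ y j|
      ≤ (1 / (N : ℝ)) * ∑ k, |Λ j k| * (C k + C j) := by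
  have hdiff : kuramotoForce ω Λ x j - kuramotoForce ω Λ y j
      = (1 / (N : ℝ)) * ∑ k, Λ j k * (sin (x k - x j) - sin (y k - y j)) := by
    simp only [kuramotoForce, mul_sub, sum_sub_distrib]; ring
  rw [hdiff, abs_mul, abs_of_nonneg (by positivity : (0 : ℝ) ≤ 1 / N)]
  gcongr
  refine (abs_sum_le_sum_abs _ _).trans (sum_le_sum fun k _ => ?_)
  rw [abs_mul]
  gcongr
  calc |sin (x k - x j) - sin (y k - y j)| ≤ |(x k - y k) - (x j - y j)| := by
        convert abs_sin_sub_sin_le _ _ using 2; ring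
    _ ≤ |x k - y k| + |x j - y j| := abs_sub _ _
    _ ≤ C k + C j := add_le_add (h k) (h j)

theorem hasDerivAt_kuramotoEnergy (hΛ : ∀ j k, Λ j k = Λ k j) {θ : Fin N → ℝ → ℝ}
    {θ' : Fin N → ℝ} {t : ℝ} (hθ : ∀ j, HasDerivAt (θ j) (θ' j) t) :
    HasDerivAt (fun t => kuramotoEnergy ω Λ fun j => θ j t)
      (-∑ j, kuramotoForce ω Λ (fun k => θ k t) j * θ' j) t := by
  have hlin : HasDerivAt (fun t => ∑ j, ω j * θ j t) (∑ j, ω j * θ' j) t :=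
    HasDerivAt.fun_sum fun j _ => (hθ j).const_mul (ω j)
  have hcos : HasDerivAt (fun t => ∑ j, ∑ k, Λ j k * cos (θ k t - θ j t))
      (∑ j, ∑ k, -(Λ j k * sin (θ k t - θ j t)) * (θ' k - θ' j)) t := by
    refine HasDerivAt.fun_sum fun j _ => HasDerivAt.fun_sum fun k _ => ?_
    exact ((((hθ k).fun_sub (hθ j)).cos).const_mul (Λ j k)).congr_deriv (by ring)
  have hantisymm :
      ∀ j k, -(Λ k j * sin (θ j t - θ k t)) = -(-(Λ j k * sin (θ k t - θ j t))) := by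
    intro j k
    rw [hΛ k j, ← neg_sub (θ k t) (θ j t), sin_neg]; ring
  refine (hlin.neg.sub (hcos.const_mul (1 / (2 * (N : ℝ))))).congr_deriv ?_
  rw [sum_sum_mul_sub_of_antisymm hantisymm]
  simp only [kuramotoForce, add_mul, sum_add_distrib, mul_assoc, ← mul_sum, neg_mul,
    sum_neg_distrib]
  ring

theorem kuramotoEnergy_ge (hω : ∑ j, ω j = 0) {x : Fin N → ℝ} {L : ℝ} (i : Fin N)
    (hx : ∀ j, |x j - x i| ≤ L) :
    -(L * ∑ j, |ω j|) - (1 / (2 * (N : ℝ))) * ∑ j, ∑ k, |Λ j k| ≤ kuramotoEnergy ω Λ x := by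
  have hlin : ∑ j, ω j * x j = ∑ j, ω j * (x j - x i) := by
    simp only [mul_sub, sum_sub_distrib, ← sum_mul, hω, zero_mul, sub_zero]
  have hlin_le : ∑ j, ω j * x j ≤ L * ∑ j, |ω j| := by
    rw [hlin, mul_sum]
    refine sum_le_sum fun j _ => (le_abs_self _).trans ?_
    rw [abs_mul, mul_comm L]
    exact mul_le_mul_of_nonneg_left (hx j) (abs_nonneg _)
  have hcos_le : ∑ j, ∑ k, Λ j k * cos (x k - x j) ≤ ∑ j, ∑ k, |Λ j k| :=
    sum_le_sum fun j _ => sum_le_sum fun k _ => (le_abs_self _).trans <| by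
      rw [abs_mul]; exact mul_le_of_le_one_right (abs_nonneg _) (abs_cos_le_one _)
  unfold kuramotoEnergy
  have : (1 / (2 * (N : ℝ))) * ∑ j, ∑ k, Λ j k * cos (x k - x j)
      ≤ (1 / (2 * (N : ℝ))) * ∑ j, ∑ k, |Λ j k| := by gcongr
  linarith

variable (d : Fin N → ℝ)

def kuramotoSpeedBound (k : Fin N) : ℝ :=
  (|ω k| + (1 / (N : ℝ)) * ∑ i, |Λ k i|) / d k

def IsKuramotoSolution (θ : Fin N → ℝ → ℝ) : Prop :=
  ∀ j t, HasDerivAt (θ j) (kuramotoForce ω Λ (fun k => θ k t) j / d j) t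

end

namespace IsKuramotoSolution

variable {N : ℕ} {ω d : Fin N → ℝ} {Λ : Fin N → Fin N → ℝ} {θ : Fin N → ℝ → ℝ}

theorem abs_sub_le (hsol : IsKuramotoSolution ω Λ d θ) (hd : ∀ j, 0 < d j) (k : Fin N)
    (s t : ℝ) : |θ k s - θ k t| ≤ kuramotoSpeedBound ω Λ d k * |s - t| :=
  abs_sub_le_mul_abs_sub_of_hasDerivAt (hsol k) (fun t => by
    rw [abs_div, abs_of_pos (hd k)]
    exact div_le_div_of_nonneg_right (abs_kuramotoForce_le ω Λ _ k) (hd k).le) s t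

theorem uniformContinuous_velocity (hsol : IsKuramotoSolution ω Λ d θ) (hd : ∀ j, 0 < d j)
    (j : Fin N) : UniformContinuous fun t => kuramotoForce ω Λ (fun k => θ k t) j / d j := by
  refine uniformContinuous_of_abs_sub_le_mul (K := (1 / (N : ℝ)) *
    (∑ k, |Λ j k| * (kuramotoSpeedBound ω Λ d k + kuramotoSpeedBound ω Λ d j)) / d j)
    fun s t => ?_
  rw [← sub_div, abs_div, abs_of_pos (hd j)]
  refine (div_le_div_of_nonneg_right (abs_kuramotoForce_sub_le ω Λ
    (fun k => hsol.abs_sub_le hd k s t) j) (hd j).le).trans_eq ?_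
  simp only [← add_mul, ← mul_assoc, ← sum_mul]
  ring

theorem hasDerivAt_kuramotoEnergy (hsol : IsKuramotoSolution ω Λ d θ) (hd : ∀ j, 0 < d j)
    (hΛ : ∀ j k, Λ j k = Λ k j) (t : ℝ) :
    HasDerivAt (fun t => kuramotoEnergy ω Λ fun j => θ j t)
      (-∑ j, d j * (kuramotoForce ω Λ (fun k => θ k t) j / d j) ^ 2) t :=
  (_root_.hasDerivAt_kuramotoEnergy ω Λ hΛ fun j => hsol j t).congr_deriv <| by
    congr 1
    refine sum_congr rfl fun j _ => ?_
    field_simp [(hd j).ne']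

end IsKuramotoSolution

theorem stmt5_general (N : ℕ) (d : Fin N → ℝ) (hd : ∀ j, 0 < d j)
    (ω : Fin N → ℝ) (hω : ∑ j, ω j = 0)
    (Λ : Fin N → Fin N → ℝ) (hΛsym : ∀ j k, Λ j k = Λ k j)
    (θ : Fin N → ℝ → ℝ) (hθ : ∀ j, Differentiable ℝ (θ j))
    (hode : ∀ j t, d j * deriv (θ j) t
      = ω j + (1 / (N:ℝ)) * ∑ k, Λ j k * Real.sin (θ k t - θ j t))
    (L : ℝ)
    (hlock : ∀ j k, ∀ t > (0:ℝ), |θ j t - θ k t| ≤ L) :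
    ∀ j, Filter.Tendsto (fun t => deriv (θ j) t) Filter.atTop (nhds 0) := by
  intro j
  have hsol : IsKuramotoSolution ω Λ d θ := fun k t =>
    (hθ k t).hasDerivAt.congr_deriv
      (eq_div_of_mul_eq (hd k).ne' ((mul_comm _ _).trans (hode k t)))
  set v : Fin N → ℝ → ℝ := fun k t => kuramotoForce ω Λ (fun i => θ i t) k / d k
  have hdecay : ∀ t, -∑ k, d k * v k t ^ 2 ≤ -(d j * v j t ^ 2) :=
    fun t => neg_le_neg <| single_le_sum (f := fun k => d k * v k t ^ 2)
      (fun k _ => mul_nonneg (hd k).le (sq_nonneg _)) (mem_univ j)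
  have hbdd : ∀ᶠ t in atTop, -(L * ∑ k, |ω k|) - (1 / (2 * (N : ℝ))) * ∑ k, ∑ i, |Λ k i|
      ≤ kuramotoEnergy ω Λ fun k => θ k t :=
    (eventually_gt_atTop 0).mono fun t ht =>
      kuramotoEnergy_ge ω Λ hω j fun k => hlock k j t ht
  refine (tendsto_zero_of_hasDerivAt_le_neg_mul_sq (hd j)
    (hsol.hasDerivAt_kuramotoEnergy hd hΛsym) hdecay hbdd
    (hsol.uniformContinuous_velocity hd j)).congr fun t => (hsol j t).deriv.symm

theorem stmt5 (N : ℕ) (d : Fin N → ℝ) (hd : ∀ j, 0 < d j)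
    (ω : Fin N → ℝ) (hω : ∑ j, ω j = 0)
    (Λ : Fin N → Fin N → ℝ) (hΛsym : ∀ j k, Λ j k = Λ k j) (hΛdiag : ∀ j, Λ j j = 0)
    (θ : Fin N → ℝ → ℝ) (hθ : ∀ j, Differentiable ℝ (θ j))
    (hode : ∀ j t, d j * deriv (θ j) t
      = ω j + (1 / (N:ℝ)) * ∑ k, Λ j k * Real.sin (θ k t - θ j t))
    (L : ℝ) (hL : 0 < L)
    (hlock : ∀ j k, ∀ t > (0:ℝ), |θ j t - θ k t| ≤ L) :
    ∀ j, Filter.Tendsto (fun t => deriv (θ j) t) Filter.atTop (nhds 0) :=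
  stmt5_general N d hd ω hω Λ hΛsym θ hθ hode L hlock
end

section
/- Suppose ψ : [0,∞) → ℝ is continuously differentiable with ψ̇(t) → 0 as t → ∞ and limsup_{t→∞} ψ(t) = +∞. Let F : ℝ → ℝ be continuous and 2π-periodic with only finitely many zeros in [0, 2π]. Then it is impossible that ψ̇(t) = F(ψ(t)) for all t; that is, no such ψ and F exist. -/
theorem stmt6 (ψ : ℝ → ℝ) (F : ℝ → ℝ)
    (hψ : ContDiff ℝ 1 ψ)
    (hd0 : Filter.Tendsto (fun t => deriv ψ t) Filter.atTop (nhds 0))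
    (hsup : ∀ M : ℝ, ∃ᶠ t in Filter.atTop, M < ψ t)
    (hF : Continuous F) (hper : Function.Periodic F (2 * Real.pi))
    (hode : ∀ t, deriv ψ t = F (ψ t))
    (hfin : {x ∈ Set.Icc (0:ℝ) (2 * Real.pi) | F x = 0}.Finite) :
    False := by
  -- find c in [0, 2π] with F c ≠ 0
  have hpi : (0:ℝ) < 2 * Real.pi := by positivity
  obtain ⟨c, hc⟩ : ∃ c ∈ Set.Icc (0:ℝ) (2 * Real.pi), F c ≠ 0 := by
    by_contra h
    push_neg at h
    have : Set.Icc (0:ℝ) (2 * Real.pi) ⊆ {x ∈ Set.Icc (0:ℝ) (2 * Real.pi) | F x = 0} := by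
      intro x hx; exact ⟨hx, h x hx⟩
    exact (Set.infinite_coe_iff.mp (Set.Icc.infinite hpi)).mono this hfin
  obtain ⟨hcI, hcne⟩ := hc
  set ε := |F c| with hε
  have hεpos : 0 < ε := abs_pos.mpr hcne
  -- eventually |deriv ψ t| < ε
  have h1 : ∀ᶠ t in Filter.atTop, |deriv ψ t| < ε := by
    have := hd0.eventually (Metric.ball_mem_nhds (0:ℝ) hεpos)
    filter_upwards [this] with t ht
    simpa [Real.dist_eq] using ht
  obtain ⟨T, hT⟩ := h1.exists_forall_of_atTop
  -- choose k with c + k*(2π) > ψ T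
  obtain ⟨k, hk⟩ := Archimedean.arch (ψ T - c + 1) hpi
  set v := c + (k : ℝ) * (2 * Real.pi) with hv
  have hvT : ψ T < v := by
    have : (k : ℝ) * (2 * Real.pi) = k • (2 * Real.pi) := by simp [nsmul_eq_mul]
    nlinarith [hk, this ▸ hk]
  -- find t ≥ T with ψ t > v
  obtain ⟨t, ht1, ht2⟩ := ((hsup v).and_eventually (Filter.eventually_ge_atTop T)).exists
  -- IVT on [T, t]
  have hTt : T ≤ t := ht2
  have hcont : ContinuousOn ψ (Set.Icc T t) := hψ.continuous.continuousOn
  have hmem : v ∈ Set.Icc (ψ T) (ψ t) := ⟨hvT.le, ht1.le⟩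
  obtain ⟨s, hs, hψs⟩ := intermediate_value_Icc hTt hcont hmem
  have hFv : F v = F c := by
    simpa using (hper.nat_mul k) c
  have : |deriv ψ s| < ε := hT s hs.1
  rw [hode s, hψs, hFv] at this
  exact absurd this (lt_irrefl ε)
end

section
/- For N ≥ 2 and ω, λ > 0 with λ > ω, the inequality 1 − 1/N + (1/N)√(1 − ω²/λ²) ≥ ω/λ holds if and only if ω/λ ≤ (N² − N + √(2N))/(N² + 1). -/
set_option maxHeartbeats 1000000 in
theorem stmt13 (N : ℕ) (hN : 2 ≤ N) (ω lam : ℝ) (hω : 0 < ω) (hlam : ω < lam) :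
    (1 - 1 / (N:ℝ) + (1 / (N:ℝ)) * Real.sqrt (1 - ω ^ 2 / lam ^ 2) ≥ ω / lam)
      ↔ ω / lam ≤ ((N:ℝ) ^ 2 - N + Real.sqrt (2 * N)) / ((N:ℝ) ^ 2 + 1) := by
  have hn : (2:ℝ) ≤ (N:ℝ) := by exact_mod_cast hN
  set n := (N:ℝ) with hn'
  have hn0 : (0:ℝ) < n := by linarith
  have hlam0 : 0 < lam := hω.trans hlam
  set r := ω / lam with hr
  have hr0 : 0 < r := div_pos hω hlam0
  have hr1 : r < 1 := (div_lt_one hlam0).mpr hlam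
  have hsq : ω ^ 2 / lam ^ 2 = r ^ 2 := by
    rw [hr]; field_simp
  rw [hsq]
  set s := Real.sqrt (1 - r ^ 2) with hs
  have hs0 : 0 ≤ s := Real.sqrt_nonneg _
  have hs2 : s ^ 2 = 1 - r ^ 2 := Real.sq_sqrt (by nlinarith)
  set t := Real.sqrt (2 * n) with ht
  have ht0 : 0 ≤ t := Real.sqrt_nonneg _
  have ht2 : t ^ 2 = 2 * n := Real.sq_sqrt (by positivity)
  have ht4 : 2 ≤ t := by nlinarith
  have hden : (0:ℝ) < n ^ 2 + 1 := by positivity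
  have expand : (r * (n ^ 2 + 1) - (n ^ 2 - n)) ^ 2 - 2 * n
      = (n ^ 2 + 1) * ((n * r - (n - 1)) ^ 2 - (1 - r ^ 2)) := by ring
  rw [le_div_iff₀ hden]
  constructor
  · intro h
    have h' : n * r ≤ n - 1 + s := by
      have h2 := mul_le_mul_of_nonneg_left h hn0.le
      have hne : n ≠ 0 := ne_of_gt hn0
      field_simp at h2
      nlinarith [h2]
    by_cases hc : n * r ≤ n - 1
    · nlinarith [mul_le_mul_of_nonneg_left hc hn0.le]
    · push_neg at hc
      have hpos : 0 < n * r - (n - 1) := by linarith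
      have hsq' : (n * r - (n - 1)) ^ 2 ≤ 1 - r ^ 2 := by
        have := pow_le_pow_left₀ hpos.le (by linarith : n * r - (n - 1) ≤ s) 2
        linarith [hs2, this]
      have hu2 : (r * (n ^ 2 + 1) - (n ^ 2 - n)) ^ 2 ≤ 2 * n := by
        have h3 : (n ^ 2 + 1) * ((n * r - (n - 1)) ^ 2 - (1 - r ^ 2)) ≤ 0 :=
          mul_nonpos_of_nonneg_of_nonpos hden.le (by linarith)
        linarith [expand, h3]
      have hupos : 0 ≤ r * (n ^ 2 + 1) - (n ^ 2 - n) := by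
        nlinarith [mul_pos hn0 hpos]
      have hfin : r * (n ^ 2 + 1) - (n ^ 2 - n) ≤ t := by
        have := (pow_le_pow_iff_left₀ hupos ht0 two_ne_zero).mp (by linarith [hu2, ht2])
        exact this
      linarith [hfin]
  · intro h
    have key : n * r ≤ n - 1 + s := by
      by_cases hc : n * r ≤ n - 1
      · linarith
      · push_neg at hc
        have hpos : 0 < n * r - (n - 1) := by linarith
        have hupos : 0 < r * (n ^ 2 + 1) - (n ^ 2 - n) := by
          nlinarith [mul_pos hn0 hpos]
        have hu2 : (r * (n ^ 2 + 1) - (n ^ 2 - n)) ^ 2 ≤ 2 * n := by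
          have h3 := pow_le_pow_left₀ hupos.le
            (by linarith : r * (n ^ 2 + 1) - (n ^ 2 - n) ≤ t) 2
          linarith [ht2, h3]
        have hsq' : (n * r - (n - 1)) ^ 2 ≤ 1 - r ^ 2 := by
          have h4 : (n ^ 2 + 1) * ((n * r - (n - 1)) ^ 2 - (1 - r ^ 2)) ≤ 0 := by
            linarith [expand, hu2]
          nlinarith [h4, hden]
        have hfin : n * r - (n - 1) ≤ s := by
          have := (pow_le_pow_iff_left₀ hpos.le hs0 two_ne_zero).mp
            (by linarith [hsq', hs2])
          exact this
        linarith [hfin]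
    have hgoal : 1 - 1 / n + (1 / n) * s = (n - 1 + s) / n := by
      field_simp
    rw [ge_iff_le, hgoal, le_div_iff₀ hn0]
    linarith [key]
end

section
/- Suppose θ solves d_j θ̇_j = ω_j + λ R(t) sin(Φ(t) − θ_j) with λ > 0, and suppose there exist R* > |ω_j|/λ, Φ* ∈ ℝ, T > 0, and 0 < ε ≪ 1 with |ω_j| < λ(R* − ε) sin(π/2 − ε), such that R(t) > R* − ε and |Φ(t) − Φ*| < ε for all t > T. Then θ_j(t) is bounded for t > T: if at some time t₁ > T we have θ_j(t₁) = Φ* + π/2 + 2πn for some positive integer n (first such crossing), then θ̇_j(t₁) < 0, a contradiction with upward crossing; hence θ_j never reaches Φ* + π/2 + 2πn for n ≥ 1 after time T. -/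
theorem stmt17 (dj ωj lam Rstar Φstar T ε : ℝ)
    (θj : ℝ → ℝ) (R Φ : ℝ → ℝ)
    (hdj : 0 < dj) (hlam : 0 < lam)
    (hode : ∀ t, dj * deriv θj t = ωj + lam * R t * Real.sin (Φ t - θj t))
    (hRstar : Rstar > |ωj| / lam)
    (hε : 0 < ε) (hε2 : ε < Real.pi / 2) (hRε : 0 < Rstar - ε)
    (hbar : |ωj| < lam * (Rstar - ε) * Real.sin (Real.pi / 2 - ε))
    (hT : 0 < T)
    (hclose : ∀ t > T, R t > Rstar - ε ∧ |Φ t - Φstar| < ε) :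
    ∀ t₁ > T, ∀ n : ℕ, 1 ≤ n →
      θj t₁ = Φstar + Real.pi / 2 + 2 * Real.pi * n → deriv θj t₁ < 0 := by
  intro t₁ ht₁ n hn hθ
  obtain ⟨hR, hΦ⟩ := hclose t₁ ht₁
  set δ := Φ t₁ - Φstar with hδ
  have hsin : Real.sin (Φ t₁ - θj t₁) = -Real.cos δ := by
    have : Φ t₁ - θj t₁ = δ - Real.pi / 2 - n * (2 * Real.pi) := by
      rw [hθ]; ring
    rw [this, Real.sin_sub_nat_mul_two_pi, Real.sin_sub, Real.sin_pi_div_two,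
      Real.cos_pi_div_two]
    ring
  have hcos : Real.cos ε ≤ Real.cos δ := by
    rw [← Real.cos_abs δ]
    apply Real.cos_le_cos_of_nonneg_of_le_pi (abs_nonneg δ)
      (by linarith [Real.pi_pos]) (le_of_lt hΦ)
  have hcosε : Real.cos ε = Real.sin (Real.pi / 2 - ε) := by
    rw [Real.sin_pi_div_two_sub]
  have hsinpos : 0 < Real.sin (Real.pi / 2 - ε) := by
    apply Real.sin_pos_of_pos_of_lt_pi (by linarith) (by linarith [Real.pi_pos])
  have hkey : lam * (Rstar - ε) * Real.sin (Real.pi / 2 - ε) ≤ lam * R t₁ * Real.cos δ := by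
    have h1 : lam * (Rstar - ε) ≤ lam * R t₁ := by nlinarith
    rw [hcosε] at hcos
    have h2 : 0 < Real.cos δ := by linarith
    nlinarith [mul_le_mul_of_nonneg_left hcos (le_of_lt (mul_pos hlam hRε)),
      mul_le_mul_of_nonneg_right h1 (le_of_lt h2)]
  have hode1 := hode t₁
  rw [hsin] at hode1
  have hω : ωj ≤ |ωj| := le_abs_self ωj
  have : dj * deriv θj t₁ < 0 := by
    rw [hode1]; nlinarith
  nlinarith
end
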